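/- (Chow–Liu upper bound) Let X₁,…,Xₖ be discrete random variables with finite support and let T be any tree on the vertex set {1,…,k}. Then H(X₁,…,Xₖ) ≤ ∑_{i=1}^k H(Xᵢ) − ∑_{(i,j)∈E(T)} I(Xᵢ;Xⱼ), where the second sum is over the edges of T. -/

import Mathlib

open Finset

noncomputable def pmfOf {Ω : Type*} [Fintype Ω] {α : Type*} [Fintype α] [DecidableEq α]
    (μ : Ω → ℝ) (X : Ω → α) (a : α) : ℝ :=
  ∑ ω, if X ω = a then μ ω else 0

noncomputable def entropy {Ω : Type*} [Fintype Ω] {α : Type*} [Fintype α] [DecidableEq α]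
    (μ : Ω → ℝ) (X : Ω → α) : ℝ :=
  -∑ a, pmfOf μ X a * Real.log (pmfOf μ X a)

noncomputable def mutualInfo {Ω : Type*} [Fintype Ω] {α β : Type*}
    [Fintype α] [DecidableEq α] [Fintype β] [DecidableEq β]
    (μ : Ω → ℝ) (X : Ω → α) (Y : Ω → β) : ℝ :=
  ∑ a, ∑ b, pmfOf μ (fun ω => (X ω, Y ω)) (a, b) *
    Real.log (pmfOf μ (fun ω => (X ω, Y ω)) (a, b) / (pmfOf μ X a * pmfOf μ Y b))

set_option linter.unusedSectionVars false

section Analytic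
variable {Ω : Type*} [Fintype Ω] {α β : Type*} [Fintype α] [DecidableEq α]
  [Fintype β] [DecidableEq β] (μ : Ω → ℝ)

lemma pmfOf_nonneg (hμ : ∀ ω, 0 ≤ μ ω) (X : Ω → α) (a : α) : 0 ≤ pmfOf μ X a :=
  Finset.sum_nonneg fun ω _ => by split <;> simp [hμ ω]

lemma sum_pmfOf_mul (X : Ω → α) (g : α → ℝ) :
    ∑ a, pmfOf μ X a * g a = ∑ ω, μ ω * g (X ω) := by
  simp only [pmfOf, Finset.sum_mul, ite_mul, zero_mul]
  rw [Finset.sum_comm]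
  refine Finset.sum_congr rfl fun ω _ => ?_
  simp [Finset.sum_ite_eq]

lemma sum_pmfOf (X : Ω → α) : ∑ a, pmfOf μ X a = ∑ ω, μ ω := by
  simpa using sum_pmfOf_mul μ X (fun _ => 1)

lemma pmfOf_pair_fst (X : Ω → α) (Y : Ω → β) (a : α) :
    ∑ b, pmfOf μ (fun ω => (X ω, Y ω)) (a, b) = pmfOf μ X a := by
  simp only [pmfOf, Prod.mk.injEq]
  rw [Finset.sum_comm]
  refine Finset.sum_congr rfl fun ω _ => ?_
  simp [ite_and, Finset.sum_ite_eq]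

lemma pmfOf_pair_snd (X : Ω → α) (Y : Ω → β) (b : β) :
    ∑ a, pmfOf μ (fun ω => (X ω, Y ω)) (a, b) = pmfOf μ Y b := by
  simp only [pmfOf, Prod.mk.injEq]
  rw [Finset.sum_comm]
  refine Finset.sum_congr rfl fun ω _ => ?_
  by_cases h : Y ω = b <;> simp [h, ite_and, Finset.sum_ite_eq]

lemma pmfOf_pair_le_fst (hμ : ∀ ω, 0 ≤ μ ω) (X : Ω → α) (Y : Ω → β) (a : α) (b : β) :
    pmfOf μ (fun ω => (X ω, Y ω)) (a, b) ≤ pmfOf μ X a := by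
  refine Finset.sum_le_sum fun ω _ => ?_
  simp only [Prod.mk.injEq]
  split
  · next h => simp [h.1]
  · split <;> simp [hμ ω]

lemma pmfOf_pair_le_snd (hμ : ∀ ω, 0 ≤ μ ω) (X : Ω → α) (Y : Ω → β) (a : α) (b : β) :
    pmfOf μ (fun ω => (X ω, Y ω)) (a, b) ≤ pmfOf μ Y b := by
  refine Finset.sum_le_sum fun ω _ => ?_
  simp only [Prod.mk.injEq]
  split
  · next h => simp [h.2]
  · split <;> simp [hμ ω]

lemma pmfOf_le_apply (hμ : ∀ ω, 0 ≤ μ ω) (X : Ω → α) (ω : Ω) :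
    μ ω ≤ pmfOf μ X (X ω) := by
  classical
  calc μ ω = ∑ ω' ∈ {ω}, (if X ω' = X ω then μ ω' else 0) := by simp
  _ ≤ _ := Finset.sum_le_sum_of_subset_of_nonneg (by simp)
      (fun ω' _ _ => by split <;> simp [hμ ω'])

lemma gibbs (P q : β → ℝ) (hP : ∀ x, 0 ≤ P x) (hPsum : ∑ x, P x = 1)
    (hq : ∀ x, 0 ≤ q x) (hqsum : ∑ x, q x ≤ 1)
    (hdom : ∀ x, P x ≠ 0 → q x ≠ 0) :
    ∑ x, P x * Real.log (q x) ≤ ∑ x, P x * Real.log (P x) := by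
  have key : ∀ x, P x * Real.log (q x) - P x * Real.log (P x) ≤ q x - P x := by
    intro x
    rcases eq_or_ne (P x) 0 with h | h
    · simp [h, hq x]
    · have hP' : 0 < P x := lt_of_le_of_ne (hP x) (Ne.symm h)
      have hq' : 0 < q x := lt_of_le_of_ne (hq x) (Ne.symm (hdom x h))
      have h1 : Real.log (q x) - Real.log (P x) = Real.log (q x / P x) :=
        (Real.log_div hq'.ne' hP'.ne').symm
      have h2 : Real.log (q x / P x) ≤ q x / P x - 1 :=
        Real.log_le_sub_one_of_pos (div_pos hq' hP')
      calc P x * Real.log (q x) - P x * Real.log (P x)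
          = P x * Real.log (q x / P x) := by rw [← h1]; ring
        _ ≤ P x * (q x / P x - 1) := by
            exact mul_le_mul_of_nonneg_left h2 (hP x)
        _ = q x - P x := by field_simp
  have := Finset.sum_le_sum (fun x (_ : x ∈ Finset.univ) => key x)
  rw [Finset.sum_sub_distrib, Finset.sum_sub_distrib, hPsum] at this
  linarith

end Analytic


section Tree
variable {V : Type*} [DecidableEq V] {G : SimpleGraph V} {r : V}

lemma tree_exists_parent (hc : G.Connected) {i : V} (hi : i ≠ r) :
    ∃ j, G.Adj i j ∧ G.dist j r + 1 = G.dist i r := by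
  obtain ⟨p, hp⟩ := hc.exists_walk_length_eq_dist i r
  obtain ⟨j, hadj, q, rfl⟩ := SimpleGraph.Walk.exists_eq_cons_of_ne hi p
  refine ⟨j, hadj, ?_⟩
  have h1 : G.dist j r ≤ q.length := SimpleGraph.dist_le q
  have h2 : G.dist i r ≤ G.dist i j + G.dist j r := hc.dist_triangle
  have h3 : G.dist i j = 1 := SimpleGraph.dist_eq_one_iff_adj.mpr hadj
  simp only [SimpleGraph.Walk.length_cons] at hp
  omega

lemma tree_parent_unique (hT : G.IsTree) {i j j' : V} (hij : G.Adj i j) (hij' : G.Adj i j')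
    (hd : G.dist j r + 1 = G.dist i r) (hd' : G.dist j' r + 1 = G.dist i r) : j = j' := by
  have hc := hT.isConnected
  have build : ∀ (j : V) (hij : G.Adj i j), G.dist j r + 1 = G.dist i r →
      ∃ w : G.Walk i r, w.IsPath ∧ w.getVert 1 = j := by
    intro j hij hd
    obtain ⟨p, hp, hl⟩ := hc.exists_path_of_dist j r
    have hnotmem : i ∉ p.support := by
      intro hmem
      have := SimpleGraph.dist_le (p.dropUntil i hmem)
      have := SimpleGraph.Walk.length_dropUntil_le p hmem
      omega
    refine ⟨SimpleGraph.Walk.cons hij p, (SimpleGraph.Walk.cons_isPath_iff _ _).2 ⟨hp, hnotmem⟩, ?_⟩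
    simp [SimpleGraph.Walk.getVert_cons_succ]
  obtain ⟨w1, hw1, hv1⟩ := build j hij hd
  obtain ⟨w2, hw2, hv2⟩ := build j' hij' hd'
  have : (⟨w1, hw1⟩ : G.Path i r) = ⟨w2, hw2⟩ := hT.IsAcyclic.path_unique _ _
  have hw : w1 = w2 := Subtype.ext_iff.mp this
  rw [← hv1, ← hv2, hw]

lemma tree_adj_dist_ne (hT : G.IsTree) {i j : V} (hij : G.Adj i j) :
    G.dist i r ≠ G.dist j r := by
  intro hd
  have hc := hT.isConnected
  obtain ⟨p, hp, hl⟩ := hc.exists_path_of_dist i r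
  have hij1 : G.dist j i = 1 := SimpleGraph.dist_eq_one_iff_adj.mpr hij.symm
  have hnotmem : j ∉ p.support := by
    intro hmem
    have h1 : G.dist j r ≤ (p.dropUntil j hmem).length := SimpleGraph.dist_le _
    have h2 : G.dist i j ≤ (p.takeUntil j hmem).length := SimpleGraph.dist_le _
    have h3 : (p.takeUntil j hmem).length + (p.dropUntil j hmem).length = p.length := by
      conv_rhs => rw [← p.take_spec hmem]
      rw [SimpleGraph.Walk.length_append]
    have h4 : G.dist i j = 1 := SimpleGraph.dist_eq_one_iff_adj.mpr hij
    omega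
  have hpath : (SimpleGraph.Walk.cons hij.symm p).IsPath :=
    (SimpleGraph.Walk.cons_isPath_iff _ _).2 ⟨hp, hnotmem⟩
  obtain ⟨p2, hp2, hl2⟩ := hc.exists_path_of_dist j r
  have : (⟨SimpleGraph.Walk.cons hij.symm p, hpath⟩ : G.Path j r) = ⟨p2, hp2⟩ :=
    hT.IsAcyclic.path_unique _ _
  have hw := congrArg (fun q : G.Path j r => q.1.length) this
  simp only [SimpleGraph.Walk.length_cons] at hw
  omega

lemma tree_adj_dist_cases (hT : G.IsTree) {i j : V} (hij : G.Adj i j) :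
    G.dist j r + 1 = G.dist i r ∨ G.dist i r + 1 = G.dist j r := by
  have hc := hT.isConnected
  have h1 : G.dist i r ≤ G.dist i j + G.dist j r := hc.dist_triangle
  have h2 : G.dist j r ≤ G.dist j i + G.dist i r := hc.dist_triangle
  have h3 : G.dist i j = 1 := SimpleGraph.dist_eq_one_iff_adj.mpr hij
  have h4 : G.dist j i = 1 := SimpleGraph.dist_eq_one_iff_adj.mpr hij.symm
  have h5 := tree_adj_dist_ne (r := r) hT hij
  omega

end Tree


lemma piSplitAt_symm_update {k : ℕ} {α : Fin k → Type*} [∀ i, DecidableEq (α i)]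
    (ℓ : Fin k) (a b : α ℓ) (y : ∀ j : {j // j ≠ ℓ}, α j) :
    (Equiv.piSplitAt ℓ α).symm (a, y) =
      Function.update ((Equiv.piSplitAt ℓ α).symm (b, y)) ℓ a := by
  funext j
  rcases eq_or_ne j ℓ with h | h
  · subst h; simp [Equiv.piSplitAt_symm_apply]
  · simp [Equiv.piSplitAt_symm_apply, h, Function.update_of_ne h]

lemma telescope {k : ℕ} {α : Fin k → Type*} [∀ i, Fintype (α i)] [∀ i, DecidableEq (α i)]
    (hα : ∀ i, Nonempty (α i))
    (f : Fin k → (∀ j, α j) → ℝ) (hf0 : ∀ i x, 0 ≤ f i x)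
    (D : Fin k → ℕ)
    (hdep : ∀ i (x y : ∀ j, α j), x i = y i → (∀ j, D j < D i → x j = y j) → f i x = f i y)
    (hsum : ∀ i (x : ∀ j, α j), ∑ a, f i (Function.update x i a) ≤ 1)
    (s : Finset (Fin k)) :
    (∑ x : ∀ j, α j, ∏ i, if i ∈ s then f i x else (Fintype.card (α i) : ℝ)⁻¹) ≤ 1 := by
  classical
  induction s using Finset.strongInduction with
  | _ s ih =>
  rcases s.eq_empty_or_nonempty with rfl | hs
  · simp only [Finset.notMem_empty, if_false]
    rw [Finset.sum_const, Finset.card_univ, Fintype.card_pi, nsmul_eq_mul,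
      Nat.cast_prod, ← Finset.prod_mul_distrib]
    have h1 : ∀ i ∈ Finset.univ, (Fintype.card (α i) : ℝ) * (Fintype.card (α i) : ℝ)⁻¹ = 1 := by
      intro i _
      have : (Fintype.card (α i) : ℝ) ≠ 0 := by
        exact_mod_cast Fintype.card_ne_zero (α := α i)
      field_simp
    rw [Finset.prod_congr rfl h1, Finset.prod_const_one]
  · obtain ⟨ℓ, hℓs, hmax⟩ := Finset.exists_max_image s D hs
    have step : (∑ x : ∀ j, α j, ∏ i, if i ∈ s then f i x else (Fintype.card (α i) : ℝ)⁻¹)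
        ≤ ∑ x : ∀ j, α j, ∏ i, if i ∈ s.erase ℓ then f i x else (Fintype.card (α i) : ℝ)⁻¹ := by
      have hsplit : ∀ F : (∀ j, α j) → ℝ, ∑ x, F x =
          ∑ y : ∀ j : {j // j ≠ ℓ}, α j, ∑ a : α ℓ, F ((Equiv.piSplitAt ℓ α).symm (a, y)) := by
        intro F
        rw [← Equiv.sum_comp (Equiv.piSplitAt ℓ α).symm F, Fintype.sum_prod_type,
          Finset.sum_comm]
      rw [hsplit, hsplit]
      refine Finset.sum_le_sum fun y _ => ?_
      set x0 : ∀ j, α j := (Equiv.piSplitAt ℓ α).symm (Classical.arbitrary (α ℓ), y) with hx0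
      have hxa : ∀ a : α ℓ, (Equiv.piSplitAt ℓ α).symm (a, y) = Function.update x0 ℓ a :=
        fun a => piSplitAt_symm_update ℓ a _ y
      -- the common factor
      set C : ℝ := ∏ i ∈ Finset.univ.erase ℓ,
        (if i ∈ s then f i x0 else (Fintype.card (α i) : ℝ)⁻¹) with hC
      have hC0 : 0 ≤ C := Finset.prod_nonneg fun i _ => by
        split
        · exact hf0 i x0
        · positivity
      have hfac : ∀ (a : α ℓ) (i : Fin k), i ≠ ℓ →
          (if i ∈ s then f i (Function.update x0 ℓ a) else (Fintype.card (α i) : ℝ)⁻¹)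
            = (if i ∈ s then f i x0 else (Fintype.card (α i) : ℝ)⁻¹) := by
        intro a i hi
        split
        · next his =>
          refine hdep i _ _ (Function.update_of_ne hi _ _) fun j hj => ?_
          rcases eq_or_ne j ℓ with rfl | hj'
          · exact absurd hj (not_lt.mpr (hmax i his))
          · exact Function.update_of_ne hj' _ _
        · rfl
      have hgs : ∀ a : α ℓ, (∏ i, if i ∈ s then f i ((Equiv.piSplitAt ℓ α).symm (a, y))
            else (Fintype.card (α i) : ℝ)⁻¹) = f ℓ (Function.update x0 ℓ a) * C := by
        intro a
        rw [hxa a, ← Finset.mul_prod_erase Finset.univ _ (Finset.mem_univ ℓ), if_pos hℓs]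
        congr 1
        exact Finset.prod_congr rfl fun i hi => hfac a i (Finset.ne_of_mem_erase hi)
      have hge : ∀ a : α ℓ, (∏ i, if i ∈ s.erase ℓ then f i ((Equiv.piSplitAt ℓ α).symm (a, y))
            else (Fintype.card (α i) : ℝ)⁻¹) = (Fintype.card (α ℓ) : ℝ)⁻¹ * C := by
        intro a
        rw [hxa a, ← Finset.mul_prod_erase Finset.univ _ (Finset.mem_univ ℓ),
          if_neg (Finset.notMem_erase ℓ s)]
        congr 1
        refine Finset.prod_congr rfl fun i hi => ?_
        have hiℓ : i ≠ ℓ := Finset.ne_of_mem_erase hi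
        have heq : (if i ∈ s.erase ℓ then f i (Function.update x0 ℓ a)
            else (Fintype.card (α i) : ℝ)⁻¹) = (if i ∈ s then f i (Function.update x0 ℓ a)
            else (Fintype.card (α i) : ℝ)⁻¹) := if_congr (by simp [hiℓ]) rfl rfl
        rw [heq]
        exact hfac a i hiℓ
      calc ∑ a, (∏ i, if i ∈ s then f i ((Equiv.piSplitAt ℓ α).symm (a, y))
            else (Fintype.card (α i) : ℝ)⁻¹)
          = (∑ a, f ℓ (Function.update x0 ℓ a)) * C := by
            rw [Finset.sum_mul]; exact Finset.sum_congr rfl fun a _ => hgs a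
        _ ≤ 1 * C := mul_le_mul_of_nonneg_right (hsum ℓ x0) hC0
        _ = (∑ _a : α ℓ, (Fintype.card (α ℓ) : ℝ)⁻¹) * C := by
            rw [Finset.sum_const, Finset.card_univ, nsmul_eq_mul]
            have : (Fintype.card (α ℓ) : ℝ) ≠ 0 := by
              exact_mod_cast Fintype.card_ne_zero (α := α ℓ)
            field_simp
        _ = ∑ a, (∏ i, if i ∈ s.erase ℓ then f i ((Equiv.piSplitAt ℓ α).symm (a, y))
            else (Fintype.card (α i) : ℝ)⁻¹) := by
            rw [Finset.sum_mul]; exact (Finset.sum_congr rfl fun a _ => (hge a)).symm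
    exact le_trans step (ih _ (Finset.erase_ssubset hℓs))

section MI
variable {Ω : Type*} [Fintype Ω] {α β : Type*} [Fintype α] [DecidableEq α]
  [Fintype β] [DecidableEq β] (μ : Ω → ℝ)

lemma pmfOf_pair_swap (X : Ω → α) (Y : Ω → β) (a : α) (b : β) :
    pmfOf μ (fun ω => (Y ω, X ω)) (b, a) = pmfOf μ (fun ω => (X ω, Y ω)) (a, b) := by
  unfold pmfOf
  refine Finset.sum_congr rfl fun ω _ => ?_
  have hiff : ((Y ω, X ω) = (b, a)) ↔ ((X ω, Y ω) = (a, b)) := by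
    simp [Prod.ext_iff, and_comm]
  rw [if_congr hiff rfl rfl]

lemma mutualInfo_comm (X : Ω → α) (Y : Ω → β) :
    mutualInfo μ X Y = mutualInfo μ Y X := by
  unfold mutualInfo
  rw [Finset.sum_comm]
  refine Finset.sum_congr rfl fun b _ => Finset.sum_congr rfl fun a _ => ?_
  rw [pmfOf_pair_swap, mul_comm (pmfOf μ Y b)]

end MI

theorem chow_liu_upper_bound
    {Ω : Type*} [Fintype Ω] {k : ℕ} {α : Fin k → Type*}
    [∀ i, Fintype (α i)] [∀ i, DecidableEq (α i)]
    (μ : Ω → ℝ) (hμ : ∀ ω, 0 ≤ μ ω) (hsum : ∑ ω, μ ω = 1)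
    (X : ∀ i, Ω → α i)
    (T : SimpleGraph (Fin k)) [DecidableRel T.Adj] (hT : T.IsTree) :
    entropy μ (fun ω i => X i ω) ≤
      (∑ i, entropy μ (X i)) -
        ∑ i, ∑ j, if i < j ∧ T.Adj i j then mutualInfo μ (X i) (X j) else 0 := by
  classical
  have hΩ : Nonempty Ω := by
    by_contra h
    rw [not_nonempty_iff] at h
    rw [Finset.univ_eq_empty, Finset.sum_empty] at hsum
    exact one_ne_zero hsum.symm
  have hα : ∀ i, Nonempty (α i) := fun i => hΩ.map (X i)
  have hconn : T.Connected := hT.isConnected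
  have hne : Nonempty (Fin k) := hconn.nonempty
  obtain ⟨r⟩ := hne
  -- the parent function
  have hpar_ex : ∀ i : Fin k, i ≠ r → ∃ j, T.Adj i j ∧ T.dist j r + 1 = T.dist i r :=
    fun i hi => tree_exists_parent hconn hi
  set par : Fin k → Fin k := fun i => if h : i = r then r else Classical.choose (hpar_ex i h)
    with hpar_def
  have hpar : ∀ i, i ≠ r → T.Adj i (par i) ∧ T.dist (par i) r + 1 = T.dist i r := by
    intro i hi
    simp only [hpar_def, dif_neg hi]
    exact Classical.choose_spec (hpar_ex i hi)
  have hpar_r : par r = r := by simp [hpar_def]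
  have hparne : ∀ i, i ≠ r → par i ≠ i :=
    fun i hi => (T.ne_of_adj (hpar i hi).1).symm
  have hdistr : T.dist r r = 0 := by simp [SimpleGraph.dist_self]
  have hdist0 : ∀ i : Fin k, T.dist i r = 0 → i = r :=
    fun i h => (hconn.dist_eq_zero_iff).mp h
  have hchild : ∀ {i j : Fin k}, T.Adj i j → T.dist j r + 1 = T.dist i r → par i = j := by
    intro i j hij hd
    have hir : i ≠ r := by
      intro h; subst h; omega
    exact tree_parent_unique hT (hpar i hir).1 hij (hpar i hir).2 hd
  -- the random vector and distributions
  set V : Ω → (∀ i, α i) := fun ω i => X i ω with hV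
  set P : (∀ i, α i) → ℝ := pmfOf μ V with hP
  set f : Fin k → (∀ j, α j) → ℝ := fun i x =>
    if i = r then pmfOf μ (X r) (x r)
    else pmfOf μ (fun ω => (X i ω, X (par i) ω)) (x i, x (par i)) /
      pmfOf μ (X (par i)) (x (par i)) with hf
  set q : (∀ j, α j) → ℝ := fun x => ∏ i, f i x with hq
  have hf0 : ∀ i x, 0 ≤ f i x := by
    intro i x
    simp only [hf]
    split
    · exact pmfOf_nonneg μ hμ _ _
    · exact div_nonneg (pmfOf_nonneg μ hμ _ _) (pmfOf_nonneg μ hμ _ _)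
  have hq0 : ∀ x, 0 ≤ q x := fun x => Finset.prod_nonneg fun i _ => hf0 i x
  -- q sums to at most one
  have hqsum : ∑ x : (∀ j, α j), q x ≤ 1 := by
    have hdep : ∀ i (x y : ∀ j, α j), x i = y i →
        (∀ j, T.dist j r < T.dist i r → x j = y j) → f i x = f i y := by
      intro i x y hxy hsm
      rcases eq_or_ne i r with rfl | hi
      · simp only [hf, if_pos rfl]
        rw [hxy]
      · have hd := (hpar i hi).2
        have hpx : x (par i) = y (par i) := hsm _ (by omega)
        simp only [hf, if_neg hi]
        rw [hxy, hpx]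
    have hsum1 : ∀ i (x : ∀ j, α j), ∑ a, f i (Function.update x i a) ≤ 1 := by
      intro i x
      rcases eq_or_ne i r with rfl | hi
      · simp only [hf, if_pos rfl, Function.update_self]
        rw [sum_pmfOf μ (X i), hsum]
      · simp only [hf, if_neg hi, Function.update_self,
          Function.update_of_ne (hparne i hi)]
        rw [← Finset.sum_div, pmfOf_pair_snd]
        rcases eq_or_ne (pmfOf μ (X (par i)) (x (par i))) 0 with h | h
        · simp [h]
        · rw [div_self h]
    have := telescope hα f hf0 (fun i => T.dist i r) hdep hsum1 Finset.univ
    simpa only [Finset.mem_univ, if_true, hq] using this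
  -- positivity of factors on the support of P
  have hpos : ∀ x, P x ≠ 0 → ∀ i, 0 < f i x := by
    intro x hx
    have hx' : ∑ ω, (if V ω = x then μ ω else 0) ≠ 0 := hx
    obtain ⟨ω, -, hω⟩ := Finset.exists_ne_zero_of_sum_ne_zero hx'
    have hVω : V ω = x ∧ μ ω ≠ 0 := by
      by_cases h : V ω = x
      · exact ⟨h, by simpa [h] using hω⟩
      · simp [h] at hω
    have hμω : 0 < μ ω := lt_of_le_of_ne (hμ ω) (Ne.symm hVω.2)
    have hcoord : ∀ i, X i ω = x i := fun i => congrFun hVω.1 i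
    intro i
    simp only [hf]
    split
    · next h =>
      subst h
      calc (0:ℝ) < μ ω := hμω
        _ ≤ pmfOf μ (X i) (X i ω) := pmfOf_le_apply μ hμ (X i) ω
        _ = pmfOf μ (X i) (x i) := by rw [hcoord i]
    · refine div_pos ?_ ?_
      · calc (0:ℝ) < μ ω := hμω
          _ ≤ pmfOf μ (fun ω' => (X i ω', X (par i) ω')) (X i ω, X (par i) ω) :=
            pmfOf_le_apply μ hμ _ ω
          _ = _ := by rw [hcoord i, hcoord (par i)]
      · calc (0:ℝ) < μ ω := hμω
          _ ≤ pmfOf μ (X (par i)) (X (par i) ω) := pmfOf_le_apply μ hμ _ ω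
          _ = _ := by rw [hcoord (par i)]
  have hPsum : ∑ x : (∀ j, α j), P x = 1 := by rw [hP, sum_pmfOf, hsum]
  have hgibbs : ∑ x : (∀ j, α j), P x * Real.log (q x) ≤
      ∑ x : (∀ j, α j), P x * Real.log (P x) :=
    gibbs P q (fun x => pmfOf_nonneg μ hμ V x) hPsum hq0 hqsum
      (fun x hx => ne_of_gt (Finset.prod_pos fun i _ => hpos x hx i))
  -- split the log of the product
  have hsplit : ∑ x : (∀ j, α j), P x * Real.log (q x)
      = ∑ i, ∑ x : (∀ j, α j), P x * Real.log (f i x) := by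
    rw [← Finset.sum_comm]
    refine Finset.sum_congr rfl fun x _ => ?_
    rcases eq_or_ne (P x) 0 with h | h
    · simp [h]
    · simp only [hq]
      rw [Real.log_prod (fun i _ => ne_of_gt (hpos x h i)), Finset.mul_sum]
  -- evaluate each term
  have hti : ∀ i, ∑ x : (∀ j, α j), P x * Real.log (f i x)
      = if i = r then -entropy μ (X r)
        else -entropy μ (X i) + mutualInfo μ (X i) (X (par i)) := by
    intro i
    rcases eq_or_ne i r with rfl | hi
    · rw [if_pos rfl]
      have h1 : ∑ x : (∀ j, α j), P x * Real.log (f i x)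
          = ∑ a, pmfOf μ (X i) a * Real.log (pmfOf μ (X i) a) := by
        rw [hP, sum_pmfOf_mul μ V (fun x => Real.log (f i x)),
          sum_pmfOf_mul μ (X i) (fun a => Real.log (pmfOf μ (X i) a))]
        refine Finset.sum_congr rfl fun ω _ => ?_
        simp [hf, hV]
      rw [h1, entropy, neg_neg]
    · rw [if_neg hi]
      have h1 : ∑ x : (∀ j, α j), P x * Real.log (f i x)
          = ∑ p : α i × α (par i), pmfOf μ (fun ω => (X i ω, X (par i) ω)) p *
              Real.log (pmfOf μ (fun ω => (X i ω, X (par i) ω)) p /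
                pmfOf μ (X (par i)) p.2) := by
        rw [hP, sum_pmfOf_mul μ V (fun x => Real.log (f i x)),
          sum_pmfOf_mul μ (fun ω => (X i ω, X (par i) ω))
            (fun p => Real.log (pmfOf μ (fun ω => (X i ω, X (par i) ω)) p /
              pmfOf μ (X (par i)) p.2))]
        refine Finset.sum_congr rfl fun ω _ => ?_
        simp [hf, hi, hV]
      rw [h1, Fintype.sum_prod_type]
      have hent : -entropy μ (X i) = ∑ a, ∑ b, pmfOf μ (fun ω => (X i ω, X (par i) ω)) (a, b) *
          Real.log (pmfOf μ (X i) a) := by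
        rw [entropy, neg_neg]
        refine Finset.sum_congr rfl fun a _ => ?_
        rw [← pmfOf_pair_fst μ (X i) (X (par i)) a, Finset.sum_mul]
      rw [hent, mutualInfo, ← Finset.sum_add_distrib]
      refine Finset.sum_congr rfl fun a _ => ?_
      rw [← Finset.sum_add_distrib]
      refine Finset.sum_congr rfl fun b _ => ?_
      rcases eq_or_ne (pmfOf μ (fun ω => (X i ω, X (par i) ω)) (a, b)) 0 with h | h
      · simp [h]
      · have hpair : 0 < pmfOf μ (fun ω => (X i ω, X (par i) ω)) (a, b) :=
          lt_of_le_of_ne (pmfOf_nonneg μ hμ _ _) (Ne.symm h)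
        have hpi : 0 < pmfOf μ (X i) a :=
          lt_of_lt_of_le hpair (pmfOf_pair_le_fst μ hμ _ _ a b)
        have hpj : 0 < pmfOf μ (X (par i)) b :=
          lt_of_lt_of_le hpair (pmfOf_pair_le_snd μ hμ _ _ a b)
        rw [Real.log_div h hpj.ne', Real.log_div h (mul_ne_zero hpi.ne' hpj.ne'),
          Real.log_mul hpi.ne' hpj.ne']
        ring
  -- assemble
  have hsum_t : ∑ i, (if i = r then -entropy μ (X r)
        else -entropy μ (X i) + mutualInfo μ (X i) (X (par i)))
      = -(∑ i, entropy μ (X i)) +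
        ∑ i, (if i = r then 0 else mutualInfo μ (X i) (X (par i))) := by
    rw [← Finset.sum_neg_distrib, ← Finset.sum_add_distrib]
    refine Finset.sum_congr rfl fun i _ => ?_
    rcases eq_or_ne i r with rfl | hi
    · simp
    · simp [hi]
  -- the edge sum
  have hedge : ∑ i, (if i = r then 0 else mutualInfo μ (X i) (X (par i)))
      = ∑ i, ∑ j, if i < j ∧ T.Adj i j then mutualInfo μ (X i) (X j) else 0 := by
    have hL : ∑ i, (if i = r then 0 else mutualInfo μ (X i) (X (par i)))
        = ∑ i ∈ Finset.univ.filter (fun i => ¬ i = r), mutualInfo μ (X i) (X (par i)) := by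
      rw [Finset.sum_filter]
      refine Finset.sum_congr rfl fun i _ => ?_
      rcases eq_or_ne i r with rfl | hi
      · simp
      · simp [hi]
    have hR : ∑ i, ∑ j, (if i < j ∧ T.Adj i j then mutualInfo μ (X i) (X j) else 0)
        = ∑ p ∈ (Finset.univ ×ˢ Finset.univ).filter
            (fun p : Fin k × Fin k => p.1 < p.2 ∧ T.Adj p.1 p.2),
            mutualInfo μ (X p.1) (X p.2) := by
      rw [Finset.sum_filter, Finset.sum_product]
    rw [hL, hR]
    refine Finset.sum_nbij' (i := fun i => if i < par i then (i, par i) else (par i, i))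
      (j := fun p => if par p.1 = p.2 then p.1 else p.2) ?_ ?_ ?_ ?_ ?_
    · intro i hi
      rw [Finset.mem_filter] at hi
      obtain ⟨-, hir⟩ := hi
      have hadj := (hpar i hir).1
      rcases lt_or_gt_of_ne (Ne.symm (hparne i hir)) with h | h
      · rw [if_pos h]
        simp [Finset.mem_filter, h, hadj]
      · rw [if_neg (not_lt.mpr h.le)]
        simp [Finset.mem_filter, h, hadj.symm]
    · intro p hp
      rw [Finset.mem_filter] at hp
      obtain ⟨-, hlt, hadj⟩ := hp
      rcases tree_adj_dist_cases (r := r) hT hadj with h | h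
      · have h1 : par p.1 = p.2 := hchild hadj h
        rw [if_pos h1]
        have : p.1 ≠ r := by
          intro hh; subst hh; omega
        simp [Finset.mem_filter, this]
      · have h2 : par p.2 = p.1 := hchild hadj.symm h
        have h1 : par p.1 ≠ p.2 := by
          intro hh
          rcases eq_or_ne p.1 r with hr1 | hr1
          · rw [hr1, hpar_r] at hh
            rw [hr1, ← hh] at hlt
            exact absurd hlt (lt_irrefl _)
          · have := (hpar p.1 hr1).2
            rw [hh] at this
            omega
        rw [if_neg h1]
        have : p.2 ≠ r := by
          intro hh; subst hh; omega
        simp [Finset.mem_filter, this]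
    · intro i hi
      rw [Finset.mem_filter] at hi
      obtain ⟨-, hir⟩ := hi
      rcases lt_or_gt_of_ne (Ne.symm (hparne i hir)) with h | h
      · rw [if_pos h]
        simp
      · rw [if_neg (not_lt.mpr h.le)]
        have hnp : par (par i) ≠ i := by
          intro hh
          rcases eq_or_ne (par i) r with hpr | hpr
          · rw [hpr, hpar_r] at hh; exact hir hh.symm
          · have h1 := (hpar i hir).2
            have h2 := (hpar (par i) hpr).2
            rw [hh] at h2
            omega
        rw [if_neg hnp]
    · intro p hp
      rw [Finset.mem_filter] at hp
      obtain ⟨-, hlt, hadj⟩ := hp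
      rcases tree_adj_dist_cases (r := r) hT hadj with h | h
      · have h1 : par p.1 = p.2 := hchild hadj h
        rw [if_pos h1, if_pos (h1 ▸ hlt), h1]
      · have h2 : par p.2 = p.1 := hchild hadj.symm h
        have h1 : par p.1 ≠ p.2 := by
          intro hh
          rcases eq_or_ne p.1 r with hr1 | hr1
          · rw [hr1, hpar_r] at hh
            rw [hr1, ← hh] at hlt
            exact absurd hlt (lt_irrefl _)
          · have := (hpar p.1 hr1).2
            rw [hh] at this
            omega
        rw [if_neg h1, if_neg (h2 ▸ not_lt.mpr hlt.le), h2]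
    · intro i hi
      rw [Finset.mem_filter] at hi
      obtain ⟨-, hir⟩ := hi
      rcases lt_or_gt_of_ne (Ne.symm (hparne i hir)) with h | h
      · rw [if_pos h]
      · rw [if_neg (not_lt.mpr h.le)]
        exact mutualInfo_comm μ (X i) (X (par i))
  -- final computation
  have hH : entropy μ V = -∑ x : (∀ j, α j), P x * Real.log (P x) := by
    rw [entropy, hP]
  have hchain : ∑ i, (if i = r then -entropy μ (X r)
        else -entropy μ (X i) + mutualInfo μ (X i) (X (par i)))
      ≤ ∑ x : (∀ j, α j), P x * Real.log (P x) := by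
    rw [← Finset.sum_congr rfl fun i _ => hti i, ← hsplit]
    exact hgibbs
  rw [hH]
  rw [hsum_t, hedge] at hchain
  linarith
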